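/- Revised Prawitz's Conjecture: For every formula φ of propositional logic, φ is generalized proof-theoretically valid if and only if φ is derivable in intuitionistic propositional logic. -/

import Mathlib

/-!
Common framework for proof-theoretic validity (Prawitz / Piecha–Schroeder-Heister style).

* Propositional formulas over countably many atoms (`ℕ`), with `⊥`, `∧`, `∨`, `→`;
  `¬A` abbreviates `A → ⊥`.
* Higher-level atomic rules: a rule has a finite list of premises, each premise being
  a pair of (a finite list of lower-level rules that may be discharged, an atomic
  conclusion), together with an atomic conclusion.  An atomic axiom `p̄` is
  `HLRule.mk [] p`; an assumption of an atom is identified with its axiom rule.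
* `AtDeriv S p`: the atom `p` is derivable using only rules of `S`
  (discharged rules become available).
* `Deriv S Γ φ`: natural deduction NJ augmented with the atomic rules in `S`,
  from hypotheses `Γ`.  `⊢_IPC` is `Deriv ∅ ∅`.
* `Valid 𝔖 S φ` formalizes "there is a closed `S`-valid argument for `φ`" relative to
  the proof-theoretic system `𝔖` (acceptable extensions of `S` are the supersets of `S`
  belonging to `𝔖`).  Unfolding the inductive definition of `S`-validity of arguments
  (atomic case, closed introduction case, closed non-introduction case, open case)
  clause-by-clause on the conclusion yields exactly the following recursion on formulas:
  a closed valid argument for `A ∧ B` reduces (via the non-introduction case) to one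
  ending in `∧`-introduction, i.e. closed valid arguments for `A` and `B`; similarly for
  `∨`; a closed valid argument for `A → B` reduces to one ending in `→`-introduction,
  whose immediate subargument is an open argument of `B` from the assumption `A`, which
  by the open case is valid iff every acceptable extension `S' ∈ 𝔖` of `S` having a
  closed `S'`-valid argument for `A` has one for `B`; a closed valid argument for an
  atom `p` exists iff `p` is `S`-derivable; and for `⊥` (which has no introduction rule,
  and is governed by the rules `⊥/p` for every atom `p`) iff every atom is `S`-derivable.
-/

/-- Propositional formulas over atoms `ℕ`. -/
inductive PropForm : Type
  | atom : ℕ → PropForm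
  | falsum : PropForm
  | conj : PropForm → PropForm → PropForm
  | disj : PropForm → PropForm → PropForm
  | impl : PropForm → PropForm → PropForm
  deriving DecidableEq

/-- `¬A` abbreviates `A → ⊥`. -/
def PropForm.neg (A : PropForm) : PropForm := .impl A .falsum

/-- Higher-level atomic rules. -/
inductive HLRule : Type
  | mk : List (List HLRule × ℕ) → ℕ → HLRule

/-- `AtDeriv S p`: the atom `p` is derivable using only the atomic rules in `S`;
applying a rule requires deriving each premise with its discharged rules made available. -/
inductive AtDeriv : Set HLRule → ℕ → Prop
  | app (S : Set HLRule) (prems : List (List HLRule × ℕ)) (concl : ℕ)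
      (hmem : HLRule.mk prems concl ∈ S)
      (hprem : ∀ pr ∈ prems, AtDeriv (S ∪ {R | R ∈ pr.1}) pr.2) :
      AtDeriv S concl

/-- Natural deduction NJ for intuitionistic propositional logic, augmented with the
atomic rules in `S`, with hypotheses `Γ`.  `Deriv ∅ Γ φ` is `Γ ⊢_IPC φ`. -/
inductive Deriv : Set HLRule → Set PropForm → PropForm → Prop
  | hyp {S : Set HLRule} {Γ : Set PropForm} {A : PropForm} :
      A ∈ Γ → Deriv S Γ A
  | falsumE {S : Set HLRule} {Γ : Set PropForm} {A : PropForm} :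
      Deriv S Γ .falsum → Deriv S Γ A
  | andI {S : Set HLRule} {Γ : Set PropForm} {A B : PropForm} :
      Deriv S Γ A → Deriv S Γ B → Deriv S Γ (.conj A B)
  | andE1 {S : Set HLRule} {Γ : Set PropForm} {A B : PropForm} :
      Deriv S Γ (.conj A B) → Deriv S Γ A
  | andE2 {S : Set HLRule} {Γ : Set PropForm} {A B : PropForm} :
      Deriv S Γ (.conj A B) → Deriv S Γ B
  | orI1 {S : Set HLRule} {Γ : Set PropForm} {A B : PropForm} :
      Deriv S Γ A → Deriv S Γ (.disj A B)
  | orI2 {S : Set HLRule} {Γ : Set PropForm} {A B : PropForm} :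
      Deriv S Γ B → Deriv S Γ (.disj A B)
  | orE {S : Set HLRule} {Γ : Set PropForm} {A B C : PropForm} :
      Deriv S Γ (.disj A B) → Deriv S (insert A Γ) C → Deriv S (insert B Γ) C →
      Deriv S Γ C
  | implI {S : Set HLRule} {Γ : Set PropForm} {A B : PropForm} :
      Deriv S (insert A Γ) B → Deriv S Γ (.impl A B)
  | implE {S : Set HLRule} {Γ : Set PropForm} {A B : PropForm} :
      Deriv S Γ (.impl A B) → Deriv S Γ A → Deriv S Γ B
  | rule {S : Set HLRule} {Γ : Set PropForm}
      (prems : List (List HLRule × ℕ)) (concl : ℕ) :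
      HLRule.mk prems concl ∈ S →
      (∀ pr ∈ prems, Deriv (S ∪ {R | R ∈ pr.1}) Γ (.atom pr.2)) →
      Deriv S Γ (.atom concl)

/-- `⊢_IPC φ` : derivability of `φ` in intuitionistic propositional natural deduction. -/
def IPC (φ : PropForm) : Prop := Deriv ∅ ∅ φ

/-- Auxiliary form of validity, by recursion on the formula. -/
def ValidAux (𝔖 : Set (Set HLRule)) : PropForm → Set HLRule → Prop
  | .atom p, S => AtDeriv S p
  | .falsum, S => ∀ a : ℕ, AtDeriv S a
  | .conj A B, S => ValidAux 𝔖 A S ∧ ValidAux 𝔖 B S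
  | .disj A B, S => ValidAux 𝔖 A S ∨ ValidAux 𝔖 B S
  | .impl A B, S => ∀ S' ∈ 𝔖, S ⊆ S' → ValidAux 𝔖 A S' → ValidAux 𝔖 B S'

/-- `Valid 𝔖 S φ`: relative to the proof-theoretic system `𝔖` (in which the acceptable
extensions of `S` are exactly the supersets of `S` belonging to `𝔖`), there is a closed
`S`-valid argument for `φ`. -/
def Valid (𝔖 : Set (Set HLRule)) (S : Set HLRule) (φ : PropForm) : Prop :=
  ValidAux 𝔖 φ S

/-- `𝔖 ⊨ φ`: for every `S ∈ 𝔖` there is a closed `S`-valid argument for `φ`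
(acceptable extensions taken in `𝔖`). -/
def Models (𝔖 : Set (Set HLRule)) (φ : PropForm) : Prop :=
  ∀ S ∈ 𝔖, Valid 𝔖 S φ

/-- The complete proof-theoretic system: all sets of atomic rules of all levels. -/
def completeSystem : Set (Set HLRule) := Set.univ

/-- `S`-validity of the open one-premise/one-assumption argument from `A` to `B`
(relative to `𝔖`): by the open case, for every acceptable extension `S' ∈ 𝔖` of `S`,
substituting any closed `S'`-valid argument for the assumption `A` yields an
`S'`-valid closed argument, which (the final step not being an introduction rule)
amounts to the existence of a closed `S'`-valid argument for `B`. -/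
def OpenArgValid1 (𝔖 : Set (Set HLRule)) (S : Set HLRule) (A B : PropForm) : Prop :=
  ∀ S' ∈ 𝔖, S ⊆ S' → Valid 𝔖 S' A → Valid 𝔖 S' B

/-!
Soundness is a routine induction on NJ-derivations: each rule of NJ preserves validity at every
base of every proof-theoretic system, and the empty set of atomic rules contributes nothing.

Completeness uses the freedom to choose the proof-theoretic system. If `⊬ φ`, fix a surjection
`d : ℕ → PropForm` that fixes the atoms of `φ`, so that every formula is named by an atom, and
attach to a theory `Δ` the base of atomic axioms `n` with `Δ ⊢ d n`. Take as system the bases of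
the theories that are prime for the finitely many substitution instances of subformulas of `φ`.
Because all formulas are named, inclusion of bases is inclusion of deductive closures, and by
induction validity of a subformula `A` at the base of `Δ` is derivability of `A[d]` from `Δ`.
A prime theory not deriving `φ = φ[d]` is obtained by adding to `∅` a maximal subset of those
finitely many formulas that keeps `φ` underivable, so `φ` is not valid in this system.
-/

local infix:50 " ⊢ᵢ " => Deriv ∅

namespace PropForm

instance : Inhabited PropForm := ⟨.falsum⟩

def subst (σ : ℕ → PropForm) : PropForm → PropForm
  | .atom p => σ p
  | .falsum => .falsum
  | .conj a b => .conj (a.subst σ) (b.subst σ)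
  | .disj a b => .disj (a.subst σ) (b.subst σ)
  | .impl a b => .impl (a.subst σ) (b.subst σ)

def atomBound : PropForm → ℕ
  | .atom p => p + 1
  | .falsum => 0
  | .conj a b | .disj a b | .impl a b => max a.atomBound b.atomBound

theorem subst_eq_self {σ : ℕ → PropForm} :
    ∀ {A : PropForm}, (∀ p < A.atomBound, σ p = .atom p) → A.subst σ = A
  | .atom p, h => h p p.lt_succ_self
  | .falsum, _ => rfl
  | .conj a b, h | .disj a b, h | .impl a b, h => by
    simp only [subst, atomBound, lt_max_iff] at h ⊢
    rw [subst_eq_self fun p hp => h p (.inl hp), subst_eq_self fun p hp => h p (.inr hp)]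

def subformulas : PropForm → Finset PropForm
  | .atom p => {.atom p}
  | .falsum => {.falsum}
  | .conj a b => insert (.conj a b) (a.subformulas ∪ b.subformulas)
  | .disj a b => insert (.disj a b) (a.subformulas ∪ b.subformulas)
  | .impl a b => insert (.impl a b) (a.subformulas ∪ b.subformulas)

theorem mem_subformulas_self (A : PropForm) : A ∈ A.subformulas := by
  cases A <;> simp [subformulas]

def toNat : PropForm → ℕ
  | .atom p => Nat.pair 0 p
  | .falsum => Nat.pair 1 0
  | .conj a b => Nat.pair 2 (Nat.pair a.toNat b.toNat)
  | .disj a b => Nat.pair 3 (Nat.pair a.toNat b.toNat)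
  | .impl a b => Nat.pair 4 (Nat.pair a.toNat b.toNat)

theorem toNat_injective : Function.Injective toNat := by
  intro a b h
  induction a generalizing b <;> cases b <;> grind [toNat, Nat.pair_eq_pair]

end PropForm

theorem AtDeriv.mono {S : Set HLRule} {p : ℕ} (h : AtDeriv S p) {T : Set HLRule} (hST : S ⊆ T) :
    AtDeriv T p := by
  induction h generalizing T with
  | app S prems concl hmem _ ih =>
    exact .app T prems concl (hST hmem) fun pr hpr => ih pr hpr (Set.union_subset_union_left _ hST)

theorem Deriv.mono {S : Set HLRule} {Γ : Set PropForm} {A : PropForm} (h : Deriv S Γ A)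
    {Γ' : Set PropForm} (hΓ : Γ ⊆ Γ') : Deriv S Γ' A := by
  induction h generalizing Γ' with
  | hyp hA => exact .hyp (hΓ hA)
  | falsumE _ ih => exact .falsumE (ih hΓ)
  | andI _ _ ih₁ ih₂ => exact .andI (ih₁ hΓ) (ih₂ hΓ)
  | andE1 _ ih => exact .andE1 (ih hΓ)
  | andE2 _ ih => exact .andE2 (ih hΓ)
  | orI1 _ ih => exact .orI1 (ih hΓ)
  | orI2 _ ih => exact .orI2 (ih hΓ)
  | orE _ _ _ ih ih₁ ih₂ =>
    exact .orE (ih hΓ) (ih₁ (Set.insert_subset_insert hΓ)) (ih₂ (Set.insert_subset_insert hΓ))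
  | implI _ ih => exact .implI (ih (Set.insert_subset_insert hΓ))
  | implE _ _ ih₁ ih₂ => exact .implE (ih₁ hΓ) (ih₂ hΓ)
  | rule prems concl hmem _ ih => exact .rule prems concl hmem fun pr hpr => ih pr hpr hΓ

section Soundness

variable {𝔖 : Set (Set HLRule)}

theorem ValidAux.mono {S T : Set HLRule} (hST : S ⊆ T) :
    ∀ {A : PropForm}, ValidAux 𝔖 A S → ValidAux 𝔖 A T
  | .atom _, h => AtDeriv.mono h hST
  | .falsum, h => fun a => (h a).mono hST
  | .conj _ _, h => ⟨ValidAux.mono hST h.1, ValidAux.mono hST h.2⟩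
  | .disj _ _, h => h.imp (ValidAux.mono hST) (ValidAux.mono hST)
  | .impl _ _, h => fun S' hS' hTS' => h S' hS' (hST.trans hTS')

theorem validAux_of_forall_atDeriv {S : Set HLRule} (hS : ∀ a, AtDeriv S a) :
    ∀ A : PropForm, ValidAux 𝔖 A S
  | .atom p => hS p
  | .falsum => hS
  | .conj A B => ⟨validAux_of_forall_atDeriv hS A, validAux_of_forall_atDeriv hS B⟩
  | .disj A _ => .inl (validAux_of_forall_atDeriv hS A)
  | .impl _ B => fun _ _ hSS' _ => validAux_of_forall_atDeriv (fun a => (hS a).mono hSS') B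

theorem validAux_of_deriv {S : Set HLRule} {Γ : Set PropForm} {A : PropForm} (h : Deriv S Γ A)
    (hS : S = ∅) {T : Set HLRule} (hT : T ∈ 𝔖) (hΓ : ∀ γ ∈ Γ, ValidAux 𝔖 γ T) :
    ValidAux 𝔖 A T := by
  induction h generalizing T with
  | hyp hA => exact hΓ _ hA
  | falsumE _ ih => exact validAux_of_forall_atDeriv (ih hS hT hΓ) _
  | andI _ _ ih₁ ih₂ => exact ⟨ih₁ hS hT hΓ, ih₂ hS hT hΓ⟩
  | andE1 _ ih => exact (ih hS hT hΓ).1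
  | andE2 _ ih => exact (ih hS hT hΓ).2
  | orI1 _ ih => exact .inl (ih hS hT hΓ)
  | orI2 _ ih => exact .inr (ih hS hT hΓ)
  | orE _ _ _ ih ih₁ ih₂ =>
    exact (ih hS hT hΓ).elim (fun hA => ih₁ hS hT (Set.forall_mem_insert.2 ⟨hA, hΓ⟩))
      (fun hB => ih₂ hS hT (Set.forall_mem_insert.2 ⟨hB, hΓ⟩))
  | implI _ ih =>
    exact fun T' hT' hTT' hA =>
      ih hS hT' (Set.forall_mem_insert.2 ⟨hA, fun γ hγ => (hΓ γ hγ).mono hTT'⟩)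
  | implE _ _ ih₁ ih₂ => exact ih₁ hS hT hΓ T hT subset_rfl (ih₂ hS hT hΓ)
  | rule _ _ hmem => exact absurd (hS ▸ hmem) (Set.notMem_empty _)

end Soundness

def IsPrimeOn (F : Finset PropForm) (Δ : Set PropForm) : Prop :=
  ∀ X ∈ F, ∀ Y ∈ F, Δ ⊢ᵢ .disj X Y → Δ ⊢ᵢ X ∨ Δ ⊢ᵢ Y

theorem exists_isPrimeOn_superset (F : Finset PropForm) {Δ : Set PropForm} {G : PropForm}
    (hG : ¬ Δ ⊢ᵢ G) : ∃ Δ' ⊇ Δ, IsPrimeOn F Δ' ∧ ¬ Δ' ⊢ᵢ G := by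
  classical
  obtain ⟨T, -, hTmem, hTmax⟩ := Finset.exists_le_maximal
    (F.powerset.filter fun T : Finset PropForm => ¬ Δ ∪ ↑T ⊢ᵢ G) (a := ∅) (by simpa using hG)
  obtain ⟨hTF, hTG⟩ : T ⊆ F ∧ ¬ Δ ∪ ↑T ⊢ᵢ G := by simpa using hTmem
  have extend : ∀ Z ∈ F, ¬ Δ ∪ ↑T ⊢ᵢ Z → insert Z (Δ ∪ ↑T) ⊢ᵢ G := by
    intro Z hZ hTZ
    by_contra hZG
    have hZT : insert Z T ⊆ T :=
      hTmax (by simpa [Finset.insert_subset_iff, hZ, hTF, Set.union_insert] using hZG)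
        (Finset.subset_insert Z T)
    exact hTZ (.hyp (.inr (hZT (Finset.mem_insert_self Z T))))
  refine ⟨Δ ∪ T, Set.subset_union_left, fun X hX Y hY hXY => ?_, hTG⟩
  by_contra! hXY'
  exact hTG (.orE hXY (extend X hX hXY'.1) (extend Y hY hXY'.2))

section Canonical

variable {d : ℕ → PropForm}

def canonicalBase (d : ℕ → PropForm) (Δ : Set PropForm) : Set HLRule :=
  {R | ∃ n, Δ ⊢ᵢ d n ∧ R = .mk [] n}

def canonicalSystem (d : ℕ → PropForm) (F : Finset PropForm) : Set (Set HLRule) :=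
  canonicalBase d '' {Δ | IsPrimeOn F Δ}

theorem atDeriv_canonicalBase_iff {Δ : Set PropForm} {n : ℕ} :
    AtDeriv (canonicalBase d Δ) n ↔ Δ ⊢ᵢ d n := by
  refine ⟨?_, fun h => .app _ [] n ⟨n, h, rfl⟩ (by simp)⟩
  rintro ⟨_, _, _, ⟨m, hm, hR⟩, -⟩
  obtain ⟨-, rfl⟩ := HLRule.mk.inj hR
  exact hm

theorem canonicalBase_subset_iff (hd : d.Surjective) {Δ Δ' : Set PropForm} :
    canonicalBase d Δ ⊆ canonicalBase d Δ' ↔ ∀ ψ, Δ ⊢ᵢ ψ → Δ' ⊢ᵢ ψ := by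
  refine ⟨fun h ψ hψ => ?_, fun h => ?_⟩
  · obtain ⟨n, rfl⟩ := hd ψ
    obtain ⟨m, hm, hR⟩ := h ⟨n, hψ, rfl⟩
    obtain ⟨-, rfl⟩ := HLRule.mk.inj hR
    exact hm
  · rintro _ ⟨n, hn, rfl⟩
    exact ⟨n, h _ hn, rfl⟩

theorem validAux_canonicalSystem_iff (hd : d.Surjective) {F : Finset PropForm} {A : PropForm}
    (hA : A.subformulas.image (·.subst d) ⊆ F) {Δ : Set PropForm} (hΔ : IsPrimeOn F Δ) :
    ValidAux (canonicalSystem d F) A (canonicalBase d Δ) ↔ Δ ⊢ᵢ A.subst d := by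
  induction A generalizing Δ with
  | atom p => exact atDeriv_canonicalBase_iff
  | falsum =>
    refine ⟨fun h => ?_, fun h n => atDeriv_canonicalBase_iff.2 (.falsumE h)⟩
    obtain ⟨n, hn⟩ := hd .falsum
    simpa [hn, PropForm.subst] using atDeriv_canonicalBase_iff.1 (h n)
  | conj A B ihA ihB =>
    simp only [PropForm.subformulas, Finset.image_insert, Finset.image_union,
      Finset.insert_subset_iff, Finset.union_subset_iff] at hA
    rw [ValidAux, ihA hA.2.1 hΔ, ihB hA.2.2 hΔ]
    exact ⟨fun h => .andI h.1 h.2, fun h => ⟨.andE1 h, .andE2 h⟩⟩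
  | disj A B ihA ihB =>
    simp only [PropForm.subformulas, Finset.image_insert, Finset.image_union,
      Finset.insert_subset_iff, Finset.union_subset_iff] at hA
    rw [ValidAux, ihA hA.2.1 hΔ, ihB hA.2.2 hΔ]
    refine ⟨fun h => h.elim .orI1 .orI2, hΔ _ ?_ _ ?_⟩
    · exact hA.2.1 (Finset.mem_image_of_mem _ A.mem_subformulas_self)
    · exact hA.2.2 (Finset.mem_image_of_mem _ B.mem_subformulas_self)
  | impl A B ihA ihB =>
    simp only [PropForm.subformulas, Finset.image_insert, Finset.image_union,
      Finset.insert_subset_iff, Finset.union_subset_iff] at hA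
    constructor
    · intro h
      refine .implI (by_contra fun hB => ?_)
      obtain ⟨Δ', hΔΔ', hΔ', hB'⟩ := exists_isPrimeOn_superset F hB
      have hsub : canonicalBase d Δ ⊆ canonicalBase d Δ' :=
        (canonicalBase_subset_iff hd).2 fun ψ hψ => hψ.mono ((Set.subset_insert _ _).trans hΔΔ')
      have hA' := (ihA hA.2.1 hΔ').2 (.hyp (hΔΔ' (Set.mem_insert _ _)))
      exact hB' ((ihB hA.2.2 hΔ').1 (h _ ⟨Δ', hΔ', rfl⟩ hsub hA'))
    · rintro h _ ⟨Δ', hΔ', rfl⟩ hsub hA'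
      have himp := (canonicalBase_subset_iff hd).1 hsub _ h
      exact (ihB hA.2.2 hΔ').2 (.implE himp ((ihA hA.2.1 hΔ').1 hA'))

end Canonical

noncomputable def atomDecode (N : ℕ) (n : ℕ) : PropForm :=
  if n < N then .atom n else Function.invFun PropForm.toNat (n - N)

theorem atomDecode_of_lt {N n : ℕ} (h : n < N) : atomDecode N n = .atom n := if_pos h

theorem atomDecode_surjective (N : ℕ) : (atomDecode N).Surjective := fun ψ =>
  ⟨N + ψ.toNat, by simp [atomDecode, Function.leftInverse_invFun PropForm.toNat_injective ψ]⟩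

/-- **Revised Prawitz's Conjecture.**  A propositional formula `φ` is generalized
proof-theoretically valid — i.e. for every proof-theoretic system `𝔖` and every
`S ∈ 𝔖` there is a closed `S`-valid argument for `φ` (acceptable extensions taken
in `𝔖`) — if and only if `φ` is derivable in intuitionistic propositional logic. -/
theorem revised_prawitz_conjecture (φ : PropForm) :
    (∀ 𝔖 : Set (Set HLRule), ∀ S ∈ 𝔖, Valid 𝔖 S φ) ↔ IPC φ := by
  refine ⟨fun H => by_contra fun hφ => ?_, fun h 𝔖 S hS => validAux_of_deriv h rfl hS (by simp)⟩
  set d := atomDecode φ.atomBound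
  set F := φ.subformulas.image (·.subst d)
  obtain ⟨Δ, -, hΔ, hφΔ⟩ := exists_isPrimeOn_superset F hφ
  have hvalid := (validAux_canonicalSystem_iff (atomDecode_surjective _) subset_rfl hΔ).1
    (H _ _ ⟨Δ, hΔ, rfl⟩)
  rw [PropForm.subst_eq_self fun p hp => atomDecode_of_lt hp] at hvalid
  exact hφΔ hvalid
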